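/- (Upper bound (28) for the Liapunov functional) Under the standing hypotheses, fix t ≥ 0 and σ > 0, let φ : [0,π] → ℝ be C² with φ(0) = φ(π) = 0, and let ψ : [0,π] → ℝ be continuous. Let θ > θ₂ and γ ≥ γ₃(σ) := γ₂(σ) + 1 + (a' + θ)/μ + (a' + 1)θ, where θ₂, γ₂(σ) are as in the lower-bound lemma. Set m(r) := max{|F'(ζ)| : |ζ| ≤ r}, B(d)² := (1 + m(d))·d², and g(t) := C(t) − ε'(t)/2 + 1. If d(φ,ψ) ≤ σ, then W(φ,ψ,t;γ,θ) ≤ (1 + γ)·g(t)·B(d(φ,ψ))². -/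

import Mathlib

open Real Set MeasureTheory intervalIntegral

/-!
Pointwise in `x`, Young's inequality `2θφψ ≤ θφ² + θψ²`, `(εφ'' − ψ)²/2 ≤ ε²φ''² + ψ²` and the
dissipativity `C − ε' ≥ μ(1 + ε)` bound every coefficient of the integrand of `W` by
`(1 + γ) g(t) (1 + m)` as soon as `γ` dominates `θ`, `(a' + 1)θ` and `(a' + θ)/μ`, which is what
`γ ≥ γ₃(σ)` guarantees. The only non-quadratic term is the potential `∫₀^φ F`; since `φ(0) = 0`,
`φ(x)² = ∫₀ˣ 2φφ' ≤ d²`, so `φ` takes values in `[−d, d]`, where the mean value theorem gives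
`|F(z)| ≤ m(d)|z|` and hence `|∫₀^φ F| ≤ m(d) φ²`.
-/

theorem sq_le_integral_sq_add_sq_deriv {φ φ' : ℝ → ℝ} {a b x : ℝ}
    (hφ : ∀ y ∈ Icc a b, HasDerivWithinAt φ (φ' y) (Icc a b) y)
    (hφ' : ContinuousOn φ' (Icc a b)) (ha : φ a = 0) (hx : x ∈ Icc a b) :
    φ x ^ 2 ≤ ∫ y in a..b, (φ y ^ 2 + φ' y ^ 2) := by
  have hφc : ContinuousOn φ (Icc a b) := fun y hy => (hφ y hy).continuousWithinAt
  have hsub : Icc a x ⊆ Icc a b := Icc_subset_Icc le_rfl hx.2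
  have hftc : ∫ y in a..x, 2 * φ y * φ' y = φ x ^ 2 := by
    rw [integral_eq_sub_of_hasDerivAt_of_le (f := fun y => φ y ^ 2) hx.1
      ((hφc.mono hsub).pow 2), ha]
    · ring
    · intro y hy
      have hy' : y ∈ Ioo a b := ⟨hy.1, hy.2.trans_le hx.2⟩
      simpa using ((hφ y (Ioo_subset_Icc_self hy')).hasDerivAt (Icc_mem_nhds hy'.1 hy'.2)).fun_pow 2
    · exact ((continuousOn_const.mul hφc).mul hφ' |>.mono hsub).intervalIntegrable_of_Icc hx.1
  have hint : ContinuousOn (fun y => φ y ^ 2 + φ' y ^ 2) (Icc a b) := by fun_prop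
  calc φ x ^ 2 = ∫ y in a..x, 2 * φ y * φ' y := hftc.symm
    _ ≤ ∫ y in a..x, (φ y ^ 2 + φ' y ^ 2) :=
      integral_mono_on hx.1
        (((continuousOn_const.mul hφc).mul hφ').mono hsub |>.intervalIntegrable_of_Icc hx.1)
        ((hint.mono hsub).intervalIntegrable_of_Icc hx.1)
        fun y _ => by linarith [sq_nonneg (φ y - φ' y)]
    _ ≤ ∫ y in a..b, (φ y ^ 2 + φ' y ^ 2) :=
      integral_mono_interval le_rfl hx.1 hx.2 (ae_of_all _ fun y => by positivity)
        (hint.intervalIntegrable_of_Icc (hx.1.trans hx.2))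

theorem abs_integral_le_mul_sq {F F' : ℝ → ℝ} {m r s : ℝ}
    (hF : ∀ z ∈ Icc (-r) r, HasDerivWithinAt F (F' z) (Icc (-r) r) z) (hF0 : F 0 = 0)
    (hF' : ∀ z ∈ Icc (-r) r, |F' z| ≤ m) (hs : |s| ≤ r) :
    |∫ z in (0:ℝ)..s, F z| ≤ m * s ^ 2 := by
  have h0 : (0:ℝ) ∈ Icc (-r) r := ⟨by linarith [abs_nonneg s], (abs_nonneg s).trans hs⟩
  have hm : 0 ≤ m := (abs_nonneg _).trans (hF' 0 h0)
  have hFz : ∀ z ∈ uIoc 0 s, ‖F z‖ ≤ m * |s| := by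
    intro z hz
    have hzs : |z| ≤ |s| := by simpa using abs_sub_left_of_mem_uIcc (uIoc_subset_uIcc hz)
    have hmvt := (convex_Icc (-r) r).norm_image_sub_le_of_norm_hasDerivWithin_le hF hF' h0
      (abs_le.1 (hzs.trans hs))
    simp only [hF0, sub_zero, Real.norm_eq_abs] at hmvt
    exact hmvt.trans (mul_le_mul_of_nonneg_left hzs hm)
  simpa [sq, abs_mul_abs_self, mul_assoc] using norm_integral_le_of_norm_le_const hFz

theorem IsGLB.le_apply_of_image_Ioi {f : ℝ → ℝ} {a c t : ℝ} (hc : IsGLB (f '' Ioi a) c)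
    (hf : ContinuousWithinAt f (Ici a) a) (ht : a ≤ t) : c ≤ f t := by
  rcases ht.lt_or_eq with ht | rfl
  · exact hc.1 ⟨t, ht, rfl⟩
  · exact ge_of_tendsto (hf.mono_left (nhdsWithin_mono _ Ioi_subset_Ici_self))
      (eventually_nhdsWithin_of_forall fun s hs => hc.1 ⟨s, hs, rfl⟩)

theorem liapunov_integrand_le {e C ε' a' θ γ μ m J p r s q : ℝ} (he : 0 ≤ e) (hC : 0 ≤ C)
    (hμ : 0 ≤ μ) (hdiss : μ * (1 + e) ≤ C - ε') (hθ : 0 ≤ θ) (hθγ : θ ≤ γ)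
    (ha'θ : (a' + 1) * θ ≤ 2 * (1 + γ)) (hμγ : a' + θ ≤ γ * μ) (hm : 0 ≤ m)
    (hJ : -(m * s ^ 2) ≤ J) :
    (1/2) * (γ * q ^ 2 + (e * p - q) ^ 2 + (C * (1 + γ) - ε' + e * (a' + θ)) * r ^ 2
        + a' * θ * s ^ 2 + 2 * θ * s * q - 2 * (1 + γ) * J) ≤
      (1 + γ) * (C - ε' / 2 + 1) * (1 + m) * (e ^ 2 * p ^ 2 + r ^ 2 + s ^ 2 + q ^ 2) := by
  set K := (1 + γ) * (C - ε' / 2 + 1) * (1 + m)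
  have hγ : 0 ≤ γ := hθ.trans hθγ
  have hg : 1 ≤ C - ε' / 2 + 1 := by linarith [mul_nonneg hμ (by linarith : (0:ℝ) ≤ 1 + e)]
  have hbase : 1 + γ ≤ (1 + γ) * (C - ε' / 2 + 1) := le_mul_of_one_le_right (by linarith) hg
  have hK : K = (1 + γ) * (C - ε' / 2 + 1) + (1 + γ) * (C - ε' / 2 + 1) * m := by ring
  have hKm : (1 + γ) * m ≤ (1 + γ) * (C - ε' / 2 + 1) * m := mul_le_mul_of_nonneg_right hbase hm
  have hKbase : (1 + γ) * (C - ε' / 2 + 1) ≤ K := by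
    linarith [mul_nonneg (by linarith : (0:ℝ) ≤ 1 + γ) hm]
  have hcoef_p : 1 ≤ K := by linarith
  have hcoef_q : γ / 2 + 1 + θ / 2 ≤ K := by linarith
  have hcoef_r : (C * (1 + γ) - ε' + e * (a' + θ)) / 2 ≤ K := by
    have := mul_le_mul_of_nonneg_left hdiss hγ
    have := mul_le_mul_of_nonneg_left hμγ he
    linarith [mul_nonneg hγ hμ]
  have hcoef_s : a' * θ / 2 + θ / 2 + (1 + γ) * m ≤ K := by linarith
  have hsq : 2 * θ * s * q ≤ θ * s ^ 2 + θ * q ^ 2 := by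
    linarith [mul_nonneg hθ (sq_nonneg (s - q))]
  have hp : (1/2) * (e * p - q) ^ 2 ≤ e ^ 2 * p ^ 2 + q ^ 2 := by
    linarith [sq_nonneg (e * p + q)]
  have hJ' : -(2 * (1 + γ) * J) ≤ 2 * (1 + γ) * (m * s ^ 2) := by
    linarith [mul_nonneg (by linarith : (0:ℝ) ≤ 1 + γ) (by linarith : 0 ≤ m * s ^ 2 + J)]
  linarith [mul_le_mul_of_nonneg_right hcoef_p (by positivity : 0 ≤ e ^ 2 * p ^ 2),
    mul_le_mul_of_nonneg_right hcoef_q (sq_nonneg q),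
    mul_le_mul_of_nonneg_right hcoef_r (sq_nonneg r),
    mul_le_mul_of_nonneg_right hcoef_s (sq_nonneg s)]

theorem liapunov_gamma_bounds {a' A τ μ Cbar εbar σ θ γ : ℝ} (ha' : 0 ≤ a') (hμ : 0 < μ)
    (hCbar : 0 < Cbar) (hεbar : 0 ≤ εbar) (hσ : 0 ≤ σ) (hθ : 0 ≤ θ)
    (hγ : (1 + θ) / (a' + εbar) + A ^ 2 * (1 / μ + θ / Cbar) / (a' + εbar) * σ ^ (2 * τ)
        + θ ^ 2 + 1 + 1 + (a' + θ) / μ + (a' + 1) * θ ≤ γ) :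
    θ ≤ γ ∧ (a' + 1) * θ ≤ 2 * (1 + γ) ∧ a' + θ ≤ γ * μ := by
  have h₁ : 0 ≤ (1 + θ) / (a' + εbar) := div_nonneg (by linarith) (by linarith)
  have h₂ : 0 ≤ A ^ 2 * (1 / μ + θ / Cbar) / (a' + εbar) * σ ^ (2 * τ) := by
    have : 0 ≤ 1 / μ + θ / Cbar := add_nonneg (by positivity) (div_nonneg hθ hCbar.le)
    exact mul_nonneg (div_nonneg (mul_nonneg (sq_nonneg A) this) (by linarith))
      (rpow_nonneg hσ _)
  have hdiv : 0 ≤ (a' + θ) / μ := div_nonneg (by linarith) hμ.le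
  have hprod : 0 ≤ (a' + 1) * θ := mul_nonneg (by linarith) hθ
  refine ⟨by linarith [sq_nonneg (θ - 1), sq_nonneg θ], by linarith [sq_nonneg θ], ?_⟩
  exact (div_le_iff₀ hμ).1 (by linarith [sq_nonneg θ])

theorem liapunov_upper_bound_general
    (ε ε' C C' F F' : ℝ → ℝ) (a' A τ k μ Cbar εbar ebar : ℝ)
    (hεnonneg : ∀ t ∈ Ici (0:ℝ), 0 ≤ ε t)
    (hCderiv : ∀ t ∈ Ici (0:ℝ), HasDerivWithinAt C (C' t) (Ici 0) t)
    (hFderiv : ∀ z, HasDerivAt F (F' z) z)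
    (hF'cont : Continuous F')
    (hF0 : F 0 = 0)
    (hCbar : IsGLB (C '' Ioi (0:ℝ)) Cbar) (hCbarpos : 0 < Cbar)
    (hεbar : IsGLB (ε '' Ioi (0:ℝ)) εbar)
    (hμ : 0 < μ)
    (hdiss : ∀ t ∈ Ici (0:ℝ), μ * (1 + ε t) ≤ C t - ε' t)
    (ha' : 0 ≤ a')
    -- data of the lemma
    (t σ θ γ : ℝ) (ht : 0 ≤ t) (hσ : 0 < σ)
    (φ φ' φ'' ψ : ℝ → ℝ)
    (hφ' : ∀ x ∈ Icc (0:ℝ) π, HasDerivWithinAt φ (φ' x) (Icc 0 π) x)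
    (hφ'' : ∀ x ∈ Icc (0:ℝ) π, HasDerivWithinAt φ' (φ'' x) (Icc 0 π) x)
    (hφ''cont : ContinuousOn φ'' (Icc (0:ℝ) π))
    (hψcont : ContinuousOn ψ (Icc (0:ℝ) π))
    (hbc0 : φ 0 = 0)
    (hθ : max (max (max (2 * a') (2 * k / μ - a'))
          ((5 - ebar - a' * (μ - Cbar)) / (μ + Cbar / 2 - 2 * k)))
        ((k + 5/4) / (a' + εbar / 2)) < θ)
    (hγ : (1 + θ) / (a' + εbar)
        + A ^ 2 * (1 / μ + θ / Cbar) / (a' + εbar) * σ ^ (2 * τ)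
        + θ ^ 2 + 1
        + 1 + (a' + θ) / μ + (a' + 1) * θ ≤ γ) :
    (∫ x in (0:ℝ)..π, (1/2) * (γ * (ψ x)^2 + (ε t * φ'' x - ψ x)^2
        + (C t * (1 + γ) - ε' t + ε t * (a' + θ)) * (φ' x)^2
        + a' * θ * (φ x)^2 + 2 * θ * φ x * ψ x
        - 2 * (1 + γ) * ∫ z in (0:ℝ)..(φ x), F z)) ≤
      (1 + γ) * (C t - ε' t / 2 + 1) *
        ((1 + sSup ((fun ζ => |F' ζ|) ''
            Icc (-(Real.sqrt (∫ x in (0:ℝ)..π,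
              ((ε t)^2 * (φ'' x)^2 + (φ' x)^2 + (φ x)^2 + (ψ x)^2))))
              (Real.sqrt (∫ x in (0:ℝ)..π,
              ((ε t)^2 * (φ'' x)^2 + (φ' x)^2 + (φ x)^2 + (ψ x)^2))))) *
          (∫ x in (0:ℝ)..π,
            ((ε t)^2 * (φ'' x)^2 + (φ' x)^2 + (φ x)^2 + (ψ x)^2))) := by
  set I := ∫ x in (0:ℝ)..π, ((ε t)^2 * (φ'' x)^2 + (φ' x)^2 + (φ x)^2 + (ψ x)^2)
  set m := sSup ((fun ζ => |F' ζ|) '' Icc (-√I) √I)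
  have hφc : ContinuousOn φ (Icc 0 π) := fun x hx => (hφ' x hx).continuousWithinAt
  have hφ'c : ContinuousOn φ' (Icc 0 π) := fun x hx => (hφ'' x hx).continuousWithinAt
  have hφI : ∀ x ∈ Icc 0 π, |φ x| ≤ √I := fun x hx => abs_le_sqrt <|
    (sq_le_integral_sq_add_sq_deriv hφ' hφ'c hbc0 hx).trans <|
      integral_mono_on pi_nonneg (ContinuousOn.intervalIntegrable_of_Icc pi_nonneg (by fun_prop))
        (ContinuousOn.intervalIntegrable_of_Icc pi_nonneg (by fun_prop)) fun x _ => by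
          linarith [mul_nonneg (sq_nonneg (ε t)) (sq_nonneg (φ'' x)), sq_nonneg (ψ x)]
  have hm : ∀ z ∈ Icc (-√I) √I, |F' z| ≤ m := fun z hz =>
    le_csSup (isCompact_Icc.image_of_continuousOn hF'cont.abs.continuousOn).bddAbove ⟨z, hz, rfl⟩
  have hm0 : 0 ≤ m := (abs_nonneg _).trans (hm 0 ⟨by simp, by positivity⟩)
  have hJ : ∀ x ∈ Icc 0 π, -(m * φ x ^ 2) ≤ ∫ z in (0:ℝ)..φ x, F z := fun x hx =>
    (abs_le.1 (abs_integral_le_mul_sq (fun z _ => (hFderiv z).hasDerivWithinAt) hF0 hm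
      (hφI x hx))).1
  have hε : 0 ≤ ε t := hεnonneg t ht
  have hC : 0 ≤ C t := hCbarpos.le.trans <|
    hCbar.le_apply_of_image_Ioi (hCderiv 0 self_mem_Ici).continuousWithinAt ht
  have hθ0 : 0 ≤ θ := by
    simp only [max_lt_iff] at hθ
    linarith [hθ.1.1.1]
  have hεbar0 : 0 ≤ εbar := 
    hεbar.2 fun _ ⟨s, hs, hse⟩ => hse ▸ hεnonneg s (mem_Ici.2 (le_of_lt hs))
  obtain ⟨hθγ, ha'θ, hμγ⟩ := liapunov_gamma_bounds ha' hμ hCbarpos hεbar0 hσ.le hθ0 hγ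
  have hFc : Continuous F := continuous_iff_continuousAt.2 fun z => (hFderiv z).continuousAt
  have hprim : ContinuousOn (fun x => ∫ z in (0:ℝ)..φ x, F z) (Icc 0 π) :=
    (continuous_primitive (fun a b => hFc.intervalIntegrable a b) 0).comp_continuousOn hφc
  calc _ ≤ ∫ x in (0:ℝ)..π, (1 + γ) * (C t - ε' t / 2 + 1) * (1 + m) *
          ((ε t)^2 * (φ'' x)^2 + (φ' x)^2 + (φ x)^2 + (ψ x)^2) :=
        integral_mono_on pi_nonneg (ContinuousOn.intervalIntegrable_of_Icc pi_nonneg (by fun_prop))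
          (ContinuousOn.intervalIntegrable_of_Icc pi_nonneg (by fun_prop)) fun x hx =>
          liapunov_integrand_le hε hC hμ.le (hdiss t ht) hθ0 hθγ ha'θ hμγ hm0 (hJ x hx)
    _ = _ := by rw [intervalIntegral.integral_const_mul]; ring

/-- Upper bound (28) for the Liapunov functional: under the standing
hypotheses, for `θ > θ₂` and `γ ≥ γ₃(σ)`, if `d(φ,ψ) ≤ σ` then
`W(φ,ψ,t;γ,θ) ≤ (1+γ) g(t) B(d(φ,ψ))²`, where `g(t) = C(t) − ε'(t)/2 + 1`,
`B(d)² = (1 + m(d)) d²` and `m(r) = max{|F'(ζ)| : |ζ| ≤ r}`. -/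
theorem liapunov_upper_bound
    (ε ε' ε'' C C' F F' : ℝ → ℝ) (a' A τ k ρ μ Cbar εbar ebar : ℝ)
    (hεderiv : ∀ t ∈ Ici (0:ℝ), HasDerivWithinAt ε (ε' t) (Ici 0) t)
    (hε'deriv : ∀ t ∈ Ici (0:ℝ), HasDerivWithinAt ε' (ε'' t) (Ici 0) t)
    (hε''cont : ContinuousOn ε'' (Ici 0))
    (hεnonneg : ∀ t ∈ Ici (0:ℝ), 0 ≤ ε t)
    (hCderiv : ∀ t ∈ Ici (0:ℝ), HasDerivWithinAt C (C' t) (Ici 0) t)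
    (hC'cont : ContinuousOn C' (Ici 0))
    (hFderiv : ∀ z, HasDerivAt F (F' z) z)
    (hF'cont : Continuous F')
    (hF0 : F 0 = 0)
    (hCbar : IsGLB (C '' Ioi (0:ℝ)) Cbar) (hCbarpos : 0 < Cbar)
    (hεbar : IsGLB (ε '' Ioi (0:ℝ)) εbar)
    (hebar : IsGLB (ε'' '' Ioi (0:ℝ)) ebar)
    (hA : 0 ≤ A) (hτ : 0 ≤ τ) (hk : 0 ≤ k) (hρ : 0 < ρ) (hμ : 0 < μ)
    (hFk : ∀ z, |z| < ρ → F' z ≤ k)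
    (hCk : k ≤ Cbar)
    (hdiss : ∀ t ∈ Ici (0:ℝ), μ * (1 + ε t) ≤ C t - ε' t)
    (hmuk : 0 < μ + Cbar / 2 - 2 * k)
    (ha' : 0 ≤ a')
    (ha'ε : 0 < a' + εbar / 2)
    -- data of the lemma
    (t σ θ γ : ℝ) (ht : 0 ≤ t) (hσ : 0 < σ)
    (φ φ' φ'' ψ : ℝ → ℝ)
    (hφ' : ∀ x ∈ Icc (0:ℝ) π, HasDerivWithinAt φ (φ' x) (Icc 0 π) x)
    (hφ'' : ∀ x ∈ Icc (0:ℝ) π, HasDerivWithinAt φ' (φ'' x) (Icc 0 π) x)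
    (hφ''cont : ContinuousOn φ'' (Icc (0:ℝ) π))
    (hψcont : ContinuousOn ψ (Icc (0:ℝ) π))
    (hbc0 : φ 0 = 0) (hbcπ : φ π = 0)
    (hθ : max (max (max (2 * a') (2 * k / μ - a'))
          ((5 - ebar - a' * (μ - Cbar)) / (μ + Cbar / 2 - 2 * k)))
        ((k + 5/4) / (a' + εbar / 2)) < θ)
    (hγ : (1 + θ) / (a' + εbar)
        + A ^ 2 * (1 / μ + θ / Cbar) / (a' + εbar) * σ ^ (2 * τ)
        + θ ^ 2 + 1
        + 1 + (a' + θ) / μ + (a' + 1) * θ ≤ γ)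
    (hdσ : Real.sqrt (∫ x in (0:ℝ)..π,
        ((ε t)^2 * (φ'' x)^2 + (φ' x)^2 + (φ x)^2 + (ψ x)^2)) ≤ σ) :
    (∫ x in (0:ℝ)..π, (1/2) * (γ * (ψ x)^2 + (ε t * φ'' x - ψ x)^2
        + (C t * (1 + γ) - ε' t + ε t * (a' + θ)) * (φ' x)^2
        + a' * θ * (φ x)^2 + 2 * θ * φ x * ψ x
        - 2 * (1 + γ) * ∫ z in (0:ℝ)..(φ x), F z)) ≤
      (1 + γ) * (C t - ε' t / 2 + 1) *
        ((1 + sSup ((fun ζ => |F' ζ|) ''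
            Icc (-(Real.sqrt (∫ x in (0:ℝ)..π,
              ((ε t)^2 * (φ'' x)^2 + (φ' x)^2 + (φ x)^2 + (ψ x)^2))))
              (Real.sqrt (∫ x in (0:ℝ)..π,
              ((ε t)^2 * (φ'' x)^2 + (φ' x)^2 + (φ x)^2 + (ψ x)^2))))) *
          (∫ x in (0:ℝ)..π,
            ((ε t)^2 * (φ'' x)^2 + (φ' x)^2 + (φ x)^2 + (ψ x)^2))) :=
  liapunov_upper_bound_general ε ε' C C' F F' a' A τ k μ Cbar εbar ebar hεnonneg hCderiv hFderiv
    hF'cont hF0 hCbar hCbarpos hεbar hμ hdiss ha' t σ θ γ ht hσ φ φ' φ'' ψ hφ' hφ'' hφ''cont hψcont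
    hbc0 hθ hγ
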